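/- arXiv:2304.07670 — 3 statements merged into one kernel-verified Lean document; each statement's English description precedes it below -/
import Mathlib

section
/- Let u : P(D) → ℝ, d = |D| ≥ 3, and i, j, k ∈ D pairwise distinct. If |u(S ∪ {i}) − u(S)| ≤ ε_j for all S with j ∈ S ⊆ D \ {i}, and |u(S ∪ {k}) − u(S)| ≤ ε_i for all S with i ∈ S ⊆ D \ {k}, and additionally |u(S ∪ {k}) − u(S)| ≤ 2ε_j + ε_i for all S with j ∈ S ⊆ D \ {k} and i ∉ S, then the bivariate Shapley value satisfies |E²(u)_{kj}| ≤ (2ε_j + ε_i)/2. -/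
open Finset

noncomputable def shapWeight (d : ℕ) (S : Finset (Fin d)) : ℝ :=
  (S.card.factorial : ℝ) * ((d - S.card - 1).factorial : ℝ) / (d.factorial : ℝ)

noncomputable def biShap (d : ℕ) (u : Finset (Fin d) → ℝ) (i j : Fin d) : ℝ :=
  ∑ S ∈ (Finset.univ.erase i).powerset.filter (fun S => j ∈ S),
    shapWeight d S * (u (insert i S) - u S)

noncomputable def shapley (d : ℕ) (u : Finset (Fin d) → ℝ) (i : Fin d) : ℝ :=
  ∑ S ∈ (Finset.univ.erase i).powerset,
    shapWeight d S * (u (insert i S) - u S)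

lemma shapWeight_nonneg (d : ℕ) (S : Finset (Fin d)) : 0 ≤ shapWeight d S := by
  unfold shapWeight; positivity

lemma gauss_aux (n : ℕ) : 2 * ∑ t ∈ range n, (t + 1) = n * (n + 1) := by
  induction n with
  | zero => simp
  | succ n ih => rw [Finset.sum_range_succ, Nat.mul_add, ih]; ring

lemma weight_sum (d : ℕ) (hd : 3 ≤ d) (k j : Fin d) (hjk : j ≠ k) :
    ∑ S ∈ (Finset.univ.erase k).powerset.filter (fun S => j ∈ S), shapWeight d S
      = 1 / 2 := by
  obtain ⟨m, rfl⟩ : ∃ m, d = m + 3 := ⟨d - 3, by omega⟩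
  have hjA : j ∈ (Finset.univ.erase k) := by simp [hjk]
  set B := (Finset.univ.erase k).erase j with hB
  have hcardB : B.card = m + 1 := by
    rw [hB, card_erase_of_mem hjA, card_erase_of_mem (mem_univ k), card_univ,
      Fintype.card_fin]
    omega
  have step1 : ∑ S ∈ (Finset.univ.erase k).powerset.filter (fun S => j ∈ S),
      shapWeight (m + 3) S = ∑ T ∈ B.powerset, shapWeight (m + 3) (insert j T) := by
    refine Finset.sum_nbij' (fun S => S.erase j) (fun T => insert j T) ?_ ?_ ?_ ?_ ?_
    · intro S hS
      simp only [mem_filter, mem_powerset] at hS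
      exact mem_powerset.2 (erase_subset_erase _ hS.1)
    · intro T hT
      simp only [mem_powerset] at hT
      simp only [mem_filter, mem_powerset]
      refine ⟨insert_subset hjA (hT.trans (erase_subset _ _)), mem_insert_self _ _⟩
    · intro S hS
      simp only [mem_filter] at hS
      exact insert_erase hS.2
    · intro T hT
      simp only [mem_powerset] at hT
      exact erase_insert (fun hj => (notMem_erase j _) (hT hj))
    · intro S hS
      simp only [mem_filter] at hS
      rw [insert_erase hS.2]
  have step2 : ∀ T ∈ B.powerset, shapWeight (m + 3) (insert j T)
      = ((T.card + 1).factorial : ℝ) * ((m + 1 - T.card).factorial : ℝ)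
        / ((m + 3).factorial : ℝ) := by
    intro T hT
    simp only [mem_powerset] at hT
    have hjT : j ∉ T := fun hj => (notMem_erase j _) (hT hj)
    have hcard : (insert j T).card = T.card + 1 := card_insert_of_notMem hjT
    have hTle : T.card ≤ m + 1 := hcardB ▸ card_le_card hT
    rw [shapWeight, hcard]
    have h4 : m + 3 - (T.card + 1) - 1 = m + 1 - T.card := by omega
    rw [h4]
  rw [step1, Finset.sum_congr rfl step2, Finset.sum_powerset_apply_card
    (fun t => ((t + 1).factorial : ℝ) * ((m + 1 - t).factorial : ℝ)
        / ((m + 3).factorial : ℝ)), hcardB]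
  have key : ∀ t ∈ range (m + 2),
      (m + 1).choose t • (((t + 1).factorial : ℝ) * ((m + 1 - t).factorial : ℝ)
        / ((m + 3).factorial : ℝ))
      = ((t : ℝ) + 1) * ((m + 1).factorial : ℝ) / ((m + 3).factorial : ℝ) := by
    intro t ht
    rw [mem_range] at ht
    have htle : t ≤ m + 1 := by omega
    have hnat : (m + 1).choose t * (t + 1).factorial * (m + 1 - t).factorial
        = (t + 1) * (m + 1).factorial := by
      rw [Nat.factorial_succ]
      calc (m + 1).choose t * ((t + 1) * t.factorial) * (m + 1 - t).factorial
          = (t + 1) * ((m + 1).choose t * t.factorial * (m + 1 - t).factorial) := by ring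
        _ = (t + 1) * (m + 1).factorial := by
            rw [Nat.choose_mul_factorial_mul_factorial htle]
    have hR : ((m + 1).choose t : ℝ) * ((t + 1).factorial : ℝ) * ((m + 1 - t).factorial : ℝ)
        = ((t : ℝ) + 1) * ((m + 1).factorial : ℝ) := by exact_mod_cast hnat
    have hc : ((m + 3).factorial : ℝ) ≠ 0 := by positivity
    rw [nsmul_eq_mul]
    field_simp
    linarith [hR]
  rw [Finset.sum_congr rfl key, ← Finset.sum_div, ← Finset.sum_mul]
  have hsum : ∑ t ∈ range (m + 2), ((t : ℝ) + 1) = ((m + 2) * (m + 3) : ℕ) / 2 := by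
    have := gauss_aux (m + 2)
    have h2 : (2 : ℝ) * ∑ t ∈ range (m + 2), ((t : ℝ) + 1) = ((m + 2) * (m + 3) : ℕ) := by
      rw [← this]; push_cast; try ring
    linarith [h2]
  rw [hsum]
  have hfac : ((m + 3).factorial : ℝ)
      = ((m + 3) : ℝ) * ((m + 2) : ℝ) * ((m + 1).factorial : ℝ) := by
    have : (m + 3).factorial = (m + 3) * ((m + 2) * (m + 1).factorial) := by
      rw [Nat.factorial_succ, Nat.factorial_succ]
    rw [this]; push_cast; ring
  have hpos : (0 : ℝ) < ((m + 1).factorial : ℝ) := by positivity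
  rw [hfac]
  push_cast
  field_simp

theorem stmt4 (d : ℕ) (hd : 3 ≤ d) (u : Finset (Fin d) → ℝ) (i j k : Fin d)
    (hij : i ≠ j) (hik : i ≠ k) (hjk : j ≠ k) (εj εi : ℝ)
    (h1 : ∀ S : Finset (Fin d), S ⊆ Finset.univ.erase i → j ∈ S →
      |u (insert i S) - u S| ≤ εj)
    (h2 : ∀ S : Finset (Fin d), S ⊆ Finset.univ.erase k → i ∈ S →
      |u (insert k S) - u S| ≤ εi)
    (h3 : ∀ S : Finset (Fin d), S ⊆ Finset.univ.erase k → j ∈ S → i ∉ S →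
      |u (insert k S) - u S| ≤ 2 * εj + εi) :
    |biShap d u k j| ≤ (2 * εj + εi) / 2 := by
  have hεj : 0 ≤ εj := by
    have := h1 {j} (by simp [Ne.symm hij]) (mem_singleton_self j)
    exact le_trans (abs_nonneg _) this
  have hterm : ∀ S ∈ (Finset.univ.erase k).powerset.filter (fun S => j ∈ S),
      |shapWeight d S * (u (insert k S) - u S)| ≤ shapWeight d S * (2 * εj + εi) := by
    intro S hS
    simp only [mem_filter, mem_powerset] at hS
    rw [abs_mul, abs_of_nonneg (shapWeight_nonneg d S)]
    refine mul_le_mul_of_nonneg_left ?_ (shapWeight_nonneg d S)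
    by_cases hiS : i ∈ S
    · exact le_trans (h2 S hS.1 hiS) (by linarith)
    · exact h3 S hS.1 hS.2 hiS
  calc |biShap d u k j| ≤ ∑ S ∈ (Finset.univ.erase k).powerset.filter (fun S => j ∈ S),
        |shapWeight d S * (u (insert k S) - u S)| := Finset.abs_sum_le_sum_abs _ _
    _ ≤ ∑ S ∈ (Finset.univ.erase k).powerset.filter (fun S => j ∈ S),
        shapWeight d S * (2 * εj + εi) := Finset.sum_le_sum hterm
    _ = (∑ S ∈ (Finset.univ.erase k).powerset.filter (fun S => j ∈ S),
        shapWeight d S) * (2 * εj + εi) := by rw [Finset.sum_mul]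
    _ = (2 * εj + εi) / 2 := by rw [weight_sum d hd k j hjk]; ring
end

section
/- Let u : P(D) → ℝ be monotone, and let i, j, k ∈ D be pairwise distinct. If E²(u)_{ij} = 0 and E²(u)_{ki} = 0, then E²(u)_{kj} = 0, where E²(u)_{ab} = Σ_{b ∈ S ⊆ D\{a}} (|S|!·(d−|S|−1)!/d!)·(u(S∪{a}) − u(S)). Hence the redundancy relation on features defined by E²(u)_{ab} = 0 is transitive. -/
open Finset

lemma shapWeight_pos (d : ℕ) (hd : 0 < d) (S : Finset (Fin d)) : 0 < shapWeight d S := by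
  unfold shapWeight
  positivity

lemma biShap_zero_iff (d : ℕ) (hd : 0 < d) (u : Finset (Fin d) → ℝ)
    (hmono : ∀ S S' : Finset (Fin d), S ⊆ S' → u S ≤ u S')
    (a b : Fin d) (h : biShap d u a b = 0) :
    ∀ S : Finset (Fin d), b ∈ S → a ∉ S → u (insert a S) = u S := by
  intro S hb ha
  have hmem : S ∈ (Finset.univ.erase a).powerset.filter (fun S => b ∈ S) := by
    simp only [Finset.mem_filter, Finset.mem_powerset]
    refine ⟨fun x hx => Finset.mem_erase.mpr ⟨fun hxa => ha (hxa ▸ hx), Finset.mem_univ x⟩, hb⟩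
  have hz := (Finset.sum_eq_zero_iff_of_nonneg (fun T _ => by
    exact mul_nonneg (shapWeight_pos d hd T).le
      (sub_nonneg.mpr (hmono T (insert a T) (Finset.subset_insert a T))))).mp h S hmem
  have hw := (shapWeight_pos d hd S).ne'
  have : u (insert a S) - u S = 0 := by
    rcases mul_eq_zero.mp hz with h' | h'
    · exact absurd h' hw
    · exact h'
  linarith

theorem stmt6 (d : ℕ) (hd : 3 ≤ d) (u : Finset (Fin d) → ℝ)
    (hmono : ∀ S S' : Finset (Fin d), S ⊆ S' → u S ≤ u S')
    (i j k : Fin d) (hij : i ≠ j) (hik : i ≠ k) (hjk : j ≠ k)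
    (h1 : biShap d u i j = 0) (h2 : biShap d u k i = 0) :
    biShap d u k j = 0 := by
  have hd0 : 0 < d := by omega
  have H1 := biShap_zero_iff d hd0 u hmono i j h1
  have H2 := biShap_zero_iff d hd0 u hmono k i h2
  apply Finset.sum_eq_zero
  intro S hS
  simp only [Finset.mem_filter, Finset.mem_powerset] at hS
  obtain ⟨hsub, hjS⟩ := hS
  have hkS : k ∉ S := fun hk => (Finset.mem_erase.mp (hsub hk)).1 rfl
  have key : u (insert k S) = u S := by
    by_cases hiS : i ∈ S
    · exact H2 S hiS hkS
    · have e1 : u (insert i S) = u S := H1 S hjS hiS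
      have hikS : i ∉ insert k S := by
        simp only [Finset.mem_insert]
        push_neg
        exact ⟨hik, hiS⟩
      have e2 : u (insert i (insert k S)) = u (insert k S) :=
        H1 (insert k S) (Finset.mem_insert_of_mem hjS) hikS
      have e3 : u (insert k (insert i S)) = u (insert i S) := by
        apply H2 (insert i S) (Finset.mem_insert_self i S)
        simp only [Finset.mem_insert]
        push_neg
        exact ⟨fun h => hik h.symm, hkS⟩
      rw [Finset.insert_comm] at e2
      rw [e3] at e2
      rw [← e2, e1]
  rw [key]
  ring
end

section
/- For a monotone utility u, define the redundancy digraph H on vertex set D with edge (i,j) whenever E²(u)_{ij} = 0 (i ≠ j). Then H is a transitive digraph: (i,j), (j,k) ∈ E(H) with i, j, k pairwise distinct implies (i,k) ∈ E(H). -/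
open Finset

/-- The redundancy digraph: an edge from `a` to `b` when `b` is directionally
redundant with respect to `a`, i.e. the bivariate Shapley value vanishes. -/
def RedundancyEdge (d : ℕ) (u : Finset (Fin d) → ℝ) (a b : Fin d) : Prop :=
  a ≠ b ∧ biShap d u a b = 0

lemma biShap_eq_zero_iff (d : ℕ) (u : Finset (Fin d) → ℝ)
    (hmono : ∀ S S' : Finset (Fin d), S ⊆ S' → u S ≤ u S') (i j : Fin d) :
    biShap d u i j = 0 ↔
      ∀ S : Finset (Fin d), S ⊆ Finset.univ.erase i → j ∈ S → u (insert i S) = u S := by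
  have hd : 0 < d := Fin.pos i
  have hnn : ∀ S ∈ (Finset.univ.erase i).powerset.filter (fun S => j ∈ S),
      0 ≤ shapWeight d S * (u (insert i S) - u S) := by
    intro S _
    have := hmono S (insert i S) (Finset.subset_insert _ _)
    have := (shapWeight_pos d hd S).le
    nlinarith
  rw [biShap, Finset.sum_eq_zero_iff_of_nonneg hnn]
  constructor
  · intro h S hS hj
    have hmem : S ∈ (Finset.univ.erase i).powerset.filter (fun S => j ∈ S) := by
      simp [Finset.mem_filter, Finset.mem_powerset, hS, hj]
    have := h S hmem
    have hw := (shapWeight_pos d hd S).ne'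
    have : u (insert i S) - u S = 0 := by
      rcases mul_eq_zero.mp this with h' | h'
      · exact absurd h' hw
      · exact h'
    linarith
  · intro h S hS
    rw [Finset.mem_filter, Finset.mem_powerset] at hS
    rw [h S hS.1 hS.2]
    ring

theorem stmt19 (d : ℕ) (u : Finset (Fin d) → ℝ)
    (hmono : ∀ S S' : Finset (Fin d), S ⊆ S' → u S ≤ u S')
    (i j k : Fin d) (hij : i ≠ j) (hjk : j ≠ k) (hik : i ≠ k)
    (h1 : RedundancyEdge d u i j) (h2 : RedundancyEdge d u j k) :
    RedundancyEdge d u i k := by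
  obtain ⟨-, h1⟩ := h1
  obtain ⟨-, h2⟩ := h2
  rw [biShap_eq_zero_iff d u hmono] at h1 h2
  refine ⟨hik, (biShap_eq_zero_iff d u hmono i k).mpr ?_⟩
  intro S hS hk
  have hiS : i ∉ S := fun h => (Finset.mem_erase.mp (hS h)).1 rfl
  by_cases hjS : j ∈ S
  · exact h1 S hS hjS
  · have e1 : u (insert j S) = u S := by
      refine h2 S ?_ hk
      intro x hx
      exact Finset.mem_erase.mpr ⟨fun h => hjS (h ▸ hx), Finset.mem_univ x⟩
    have e2 : u (insert j (insert i S)) = u (insert i S) := by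
      refine h2 (insert i S) ?_ (Finset.mem_insert_of_mem hk)
      intro x hx
      refine Finset.mem_erase.mpr ⟨?_, Finset.mem_univ x⟩
      rintro rfl
      rcases Finset.mem_insert.mp hx with h | h
      · exact hij h.symm
      · exact hjS h
    have e3 : u (insert i (insert j S)) = u (insert j S) := by
      refine h1 (insert j S) ?_ (Finset.mem_insert_self j S)
      intro x hx
      refine Finset.mem_erase.mpr ⟨?_, Finset.mem_univ x⟩
      rintro rfl
      rcases Finset.mem_insert.mp hx with h | h
      · exact hij h
      · exact hiS h
    rw [Finset.insert_comm] at e2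
    rw [← e2, e3, e1]
end
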